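/- For all formulas ψ, χ, ρ, φ of L_Khm, the formula Khm(ψ,χ,ρ) ∧ Khm(ρ,χ,φ) ∧ U(ρ → χ) → Khm(ψ,χ,φ) is valid on the class of all models. -/
import Mathlib


/-- Formulas of the language L_Khm over a countable set of proposition
letters (represented by `ℕ`): `φ ::= p | ¬φ | (φ∧φ) | Khm(φ,φ,φ)`. -/
inductive Formula : Type
  | atom : ℕ → Formula
  | neg : Formula → Formula
  | and : Formula → Formula → Formula
  | khm : Formula → Formula → Formula → Formula
deriving DecidableEq

namespace Formula

/-- The falsum `⊥`, as a standard abbreviation. -/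
def falsum : Formula := and (atom 0) (neg (atom 0))

/-- The verum `⊤`. -/
def top : Formula := neg falsum

/-- Material implication, as a standard abbreviation. -/
def imp (φ ψ : Formula) : Formula := neg (and φ (neg ψ))

/-- Biimplication. -/
def biimp (φ ψ : Formula) : Formula := and (imp φ ψ) (imp ψ φ)

/-- The universal modality `Uφ := Khm(¬φ, ⊤, ⊥)`. -/
def U (φ : Formula) : Formula := khm (neg φ) top falsum

/-- Uniform substitution of formulas for proposition letters. -/
def subst (f : ℕ → Formula) : Formula → Formula
  | atom n => f n
  | neg φ => neg (subst f φ)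
  | and φ ψ => and (subst f φ) (subst f ψ)
  | khm φ χ ψ => khm (subst f φ) (subst f χ) (subst f ψ)

end Formula

/-- A model (ability map): a labelled transition system over action symbols `Act`,
with a set of states `S`, transitions `R`, and valuation `V`. -/
structure Model (Act : Type) where
  S : Type
  R : Act → S → S → Prop
  V : S → Set ℕ

namespace Model

variable {Act : Type} (M : Model Act)

/-- `M.bigStep σ s t` : `s →σ t`, i.e. `t` is reachable from `s` by executing the
sequence of actions `σ`. -/
def bigStep : List Act → M.S → M.S → Prop
  | [], s, t => s = t
  | a :: σ, s, t => ∃ u, M.R a s u ∧ bigStep σ u t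

/-- `σ = a₁⋯aₙ` is strongly executable at `s` if for each `0 ≤ k < n`,
`s →σ_k t` implies `t` has at least one `a_{k+1}`-successor. -/
def stronglyExec (σ : List Act) (s : M.S) : Prop :=
  ∀ k (h : k < σ.length) (t : M.S),
    M.bigStep (σ.take k) s t → ∃ u, M.R (σ.get ⟨k, h⟩) t u

/-- Satisfaction. `M.sat (Formula.khm ψ χ φ) s` holds iff there is `σ ∈ Act*`
such that for every `s'` with `M, s' ⊨ ψ`: `σ` is strongly `χ`-executable at `s'`
(strongly executable, and all strictly intermediate states satisfy `χ`) and
`M, t ⊨ φ` for all `t` with `s' →σ t`. -/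
def sat : Formula → M.S → Prop
  | .atom n, s => n ∈ M.V s
  | .neg φ, s => ¬ sat φ s
  | .and φ ψ, s => sat φ s ∧ sat ψ s
  | .khm ψ χ φ, s => ∃ σ : List Act, ∀ s', sat ψ s' →
      (M.stronglyExec σ s' ∧
        ∀ k, 0 < k → k < σ.length → ∀ t, M.bigStep (σ.take k) s' t → sat χ t) ∧
      (∀ t, M.bigStep σ s' t → sat φ t)

end Model

/-- A formula is valid (w.r.t. the class of all models over action symbols `Act`)
if it is satisfied at every state of every model. -/
def Valid (Act : Type) (φ : Formula) : Prop :=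
  ∀ M : Model Act, Nonempty M.S → ∀ s : M.S, M.sat φ s

/-- Boolean evaluation treating proposition letters and `Khm`-formulas as atoms. -/
def evalB (v : Formula → Bool) : Formula → Bool
  | .atom n => v (.atom n)
  | .neg φ => ! evalB v φ
  | .and φ ψ => evalB v φ && evalB v ψ
  | .khm ψ χ φ => v (.khm ψ χ φ)

/-- Propositional tautologies. -/
def Tautology (φ : Formula) : Prop := ∀ v, evalB v φ = true

open Formula in
/-- Derivability in the proof system SKHM. -/
inductive Deriv : Formula → Prop
  | taut {φ} : Tautology φ → Deriv φ
  | distU (p q) : Deriv (((U p).and (U (p.imp q))).imp (U q))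
  | tU (p) : Deriv ((U p).imp p)
  | fourKhmU (p o q) : Deriv ((khm p o q).imp (U (khm p o q)))
  | fiveKhmU (p o q) : Deriv ((neg (khm p o q)).imp (U (neg (khm p o q))))
  | empKhm (p q) : Deriv ((U (p.imp q)).imp (khm p falsum q))
  | compKhm (p o r q) :
      Deriv ((((khm p o r).and (khm r o q)).and (U (r.imp o))).imp (khm p o q))
  | oneKhm (p o q) :
      Deriv (((khm p o q).and (neg (khm p falsum q))).imp (khm p falsum o))
  | uKhm (p' p o o' q q') :
      Deriv (((((U (p'.imp p)).and (U (o.imp o'))).and (U (q.imp q'))).and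
        (khm p o q)).imp (khm p' o' q'))
  | mp {φ ψ} : Deriv (φ.imp ψ) → Deriv φ → Deriv ψ
  | necU {φ} : Deriv φ → Deriv (U φ)
  | sub {φ} (f : ℕ → Formula) : Deriv φ → Deriv (φ.subst f)

/-- Conjunction of a finite list of formulas. -/
def conjList : List Formula → Formula
  | [] => Formula.top
  | φ :: L => φ.and (conjList L)

/-- A set of formulas is SKHM-consistent if no finite conjunction of its
members has its negation derivable in SKHM. -/
def ConsistentSet (Γ : Set Formula) : Prop :=
  ∀ L : List Formula, (∀ φ ∈ L, φ ∈ Γ) → ¬ Deriv (Formula.neg (conjList L))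

/-- Maximal SKHM-consistent set. -/
def MCS (Γ : Set Formula) : Prop :=
  ConsistentSet Γ ∧ ∀ Δ, ConsistentSet Δ → Γ ⊆ Δ → Δ = Γ

/-- `Δ|Khm`: the positive `Khm`-formulas of `Δ`. -/
def khmPart (Δ : Set Formula) : Set Formula :=
  {θ ∈ Δ | ∃ ψ χ φ, θ = Formula.khm ψ χ φ}

/-- `Φ_Γ`: the set of all MCSs `Δ` with `Δ|Khm = Γ|Khm`. -/
def PhiGamma (Γ : Set Formula) : Set (Set Formula) :=
  {Δ | MCS Δ ∧ khmPart Δ = khmPart Γ}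

/-- Canonical action symbols: `⟨ψ,⊥,φ⟩` (`one ψ φ`) and `⟨χ^ψ,φ⟩` (`two χ ψ φ`). -/
inductive CanAct : Type
  | one : Formula → Formula → CanAct
  | two : Formula → Formula → Formula → CanAct
deriving DecidableEq

/-- The formula in the last component of a canonical action. -/
def CanAct.post : CanAct → Formula
  | .one _ φ => φ
  | .two _ _ φ => φ

/-- The canonical action set
`Σ_Γ = {⟨ψ,⊥,φ⟩ : Khm(ψ,⊥,φ) ∈ Γ} ∪ {⟨χ^ψ,φ⟩ : Khm(ψ,χ,φ) ∈ Γ, ¬Khm(ψ,⊥,φ) ∈ Γ}`. -/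
def SigmaGamma (Γ : Set Formula) : Set CanAct :=
  {a | (∃ ψ φ, a = CanAct.one ψ φ ∧ Formula.khm ψ Formula.falsum φ ∈ Γ) ∨
       (∃ χ ψ φ, a = CanAct.two χ ψ φ ∧ Formula.khm ψ χ φ ∈ Γ ∧
          Formula.neg (Formula.khm ψ Formula.falsum φ) ∈ Γ)}

/-- Canonical states: pairs `(Δ, χ^ψ)` (the marker `χ^ψ` is the pair `(χ, ψ)`)
with `χ ∈ Δ ∈ Φ_Γ`, and either `⟨χ^ψ,φ⟩ ∈ Σ_Γ` for some `φ`, or `⟨ψ,⊥,χ⟩ ∈ Σ_Γ`. -/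
def CanStates (Γ : Set Formula) : Set (Set Formula × Formula × Formula) :=
  {w | w.1 ∈ PhiGamma Γ ∧ w.2.1 ∈ w.1 ∧
       ((∃ φ, CanAct.two w.2.1 w.2.2 φ ∈ SigmaGamma Γ) ∨
        CanAct.one w.2.2 w.2.1 ∈ SigmaGamma Γ)}

/-- The canonical model `M^c_Γ` over the action set `Σ_Γ`. For a canonical state
`w`, `L(w) = w.1.1` and `R(w) = w.1.2`. -/
def canonicalModel (Γ : Set Formula) : Model {a : CanAct // a ∈ SigmaGamma Γ} where
  S := {w : Set Formula × Formula × Formula // w ∈ CanStates Γ}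
  R a w w' :=
    match a.1 with
    | CanAct.one ψ φ => ψ ∈ w.1.1 ∧ w'.1.2 = (φ, ψ)
    | CanAct.two χ ψ φ => w.1.2 = (χ, ψ) ∧ φ ∈ w'.1.1
  V w := {n | Formula.atom n ∈ w.1.1}


section Aux

variable {Act : Type} (M : Model Act)

lemma bigStep_append (σ1 σ2 : List Act) (s t : M.S) :
    M.bigStep (σ1 ++ σ2) s t ↔ ∃ u, M.bigStep σ1 s u ∧ M.bigStep σ2 u t := by
  induction σ1 generalizing s with
  | nil => simp [Model.bigStep]
  | cons a σ ih =>
    constructor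
    · rintro ⟨u, hu, h⟩
      obtain ⟨v, hv1, hv2⟩ := (ih u).mp h
      exact ⟨v, ⟨u, hu, hv1⟩, hv2⟩
    · rintro ⟨v, ⟨u, hu, hv1⟩, hv2⟩
      exact ⟨u, hu, (ih u).mpr ⟨v, hv1, hv2⟩⟩

lemma exists_bigStep_of_stronglyExec :
    ∀ (σ : List Act) (s : M.S), M.stronglyExec σ s → ∃ t, M.bigStep σ s t := by
  intro σ
  induction σ with
  | nil => intro s _; exact ⟨s, rfl⟩
  | cons a σ ih =>
    intro s h
    obtain ⟨u, hu⟩ := h 0 (by simp) s rfl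
    have h' : M.stronglyExec σ u := by
      intro k hk t ht
      exact h (k + 1) (by simpa using Nat.succ_lt_succ hk) t ⟨u, hu, ht⟩
    obtain ⟨t, ht⟩ := ih u h'
    exact ⟨t, u, hu, ht⟩

lemma stronglyExec_append (σ1 σ2 : List Act) (s : M.S)
    (h1 : M.stronglyExec σ1 s)
    (h2 : ∀ u, M.bigStep σ1 s u → M.stronglyExec σ2 u) :
    M.stronglyExec (σ1 ++ σ2) s := by
  intro k hk t ht
  rcases lt_or_ge k σ1.length with h' | h'
  · rw [List.take_append_of_le_length (le_of_lt h')] at ht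
    obtain ⟨u, hu⟩ := h1 k h' t ht
    refine ⟨u, ?_⟩
    rw [List.get_eq_getElem, List.getElem_append_left h']
    exact hu
  · rw [List.take_append, List.take_of_length_le h',
      bigStep_append] at ht
    obtain ⟨u, hu1, hu2⟩ := ht
    have hk2 : k - σ1.length < σ2.length := by
      simp only [List.length_append] at hk; omega
    obtain ⟨v, hv⟩ := h2 u hu1 (k - σ1.length) hk2 t hu2
    refine ⟨v, ?_⟩
    rw [List.get_eq_getElem, List.getElem_append_right h']
    exact hv

end Aux

/-- `Khm(ψ,χ,ρ) ∧ Khm(ρ,χ,φ) ∧ U(ρ → χ) → Khm(ψ,χ,φ)` is valid. -/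
theorem valid_COMPKhm (Act : Type) [Countable Act] [Nonempty Act] (ψ χ ρ φ : Formula) :
    Valid Act ((((Formula.khm ψ χ ρ).and (Formula.khm ρ χ φ)).and
      (Formula.U (ρ.imp χ))).imp (Formula.khm ψ χ φ)) := by
  intro M _ s
  show ¬ (_ ∧ ¬ _)
  rintro ⟨⟨⟨⟨σ1, h1⟩, σ2, h2⟩, hU⟩, hgoal⟩
  have hρχ : ∀ t, M.sat ρ t → M.sat χ t := by
    intro t hρ
    by_contra hχ
    obtain ⟨σ0, h0⟩ := hU
    have h := h0 t (fun hc => hc ⟨hρ, hχ⟩)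
    obtain ⟨u, hu⟩ := exists_bigStep_of_stronglyExec M σ0 t h.1.1
    exact (h.2 u hu).2 (h.2 u hu).1
  apply hgoal
  refine ⟨σ1 ++ σ2, ?_⟩
  intro s' hs'
  obtain ⟨⟨he1, hi1⟩, hend1⟩ := h1 s' hs'
  refine ⟨⟨?_, ?_⟩, ?_⟩
  · exact stronglyExec_append M σ1 σ2 s' he1 (fun u hu => ((h2 u (hend1 u hu)).1).1)
  · intro k hk0 hk t ht
    rcases lt_or_ge k σ1.length with h' | h'
    · rw [List.take_append_of_le_length (le_of_lt h')] at ht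
      exact hi1 k hk0 h' t ht
    · rw [List.take_append, List.take_of_length_le h',
        bigStep_append] at ht
      obtain ⟨u, hu1, hu2⟩ := ht
      rcases Nat.eq_or_lt_of_le h' with heq | hlt
      · have h0 : k - σ1.length = 0 := by omega
        rw [h0] at hu2
        have hut : u = t := hu2
        subst hut
        exact hρχ u (hend1 u hu1)
      · have hk2 : k - σ1.length < σ2.length := by
          simp only [List.length_append] at hk; omega
        exact ((h2 u (hend1 u hu1)).1).2 (k - σ1.length) (by omega) hk2 t hu2
  · intro t ht
    rw [bigStep_append] at ht
    obtain ⟨u, hu1, hu2⟩ := ht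
    exact (h2 u (hend1 u hu1)).2 t hu2
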